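/- arXiv:0712.4088 — 3 statements merged into one kernel-verified Lean document; each statement's English description precedes it below -/
import Mathlib

section
/- Let d be a positive integer and (λ_k)_{k≥1} a nondecreasing sequence of positive real numbers with λ_k → ∞ such that Z(t) = Σ_k e^{−λ_k t} < ∞ for every t > 0. Suppose that for some real ρ ≥ 1 and some constant A > 0 one has Σ_k (z−λ_k)_+^ρ ≥ A·(z−λ_1)_+^{ρ+d/2} for all z ≥ 0. Then for every t > 0: Z(t) ≥ A · [Γ(ρ+1+d/2)/Γ(ρ+1)] · e^{−λ_1 t} · t^{−d/2}. -/
open MeasureTheory Real Filter Set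

lemma aux_meas (lam t : ℝ) {s : ℝ} (hs : 0 ≤ s) :
    Measurable fun z : ℝ => max (z - lam) 0 ^ s * Real.exp (-z * t) := by
  have hc : Continuous fun z : ℝ => max (z - lam) 0 ^ s * Real.exp (-z * t) := by
    refine Continuous.mul ?_ ?_
    · exact ((continuous_id.sub continuous_const).max continuous_const).rpow_const
        (fun x => Or.inr hs)
    · exact Real.continuous_exp.comp (continuous_id.neg.mul continuous_const)
  exact hc.measurable

lemma aux_integrable {s lam t : ℝ} (hs : 0 < s) (hlam : 0 ≤ lam) (ht : 0 < t) :
    IntegrableOn (fun z => max (z - lam) 0 ^ s * Real.exp (-z * t)) (Ioi 0) := by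
  have hdom : IntegrableOn (fun x : ℝ => x ^ s * Real.exp (-t * x)) (Ioi 0) := by
    have := integrableOn_rpow_mul_exp_neg_mul_rpow (p := 1) (s := s) (b := t)
      (by linarith) zero_lt_one ht
    simpa [Real.rpow_one] using this
  refine hdom.mono' (aux_meas lam t hs.le).aestronglyMeasurable ?_
  filter_upwards [ae_restrict_mem measurableSet_Ioi] with z hz
  have hz0 : (0:ℝ) < z := hz
  rw [Real.norm_eq_abs, abs_of_nonneg (by positivity)]
  have h1 : max (z - lam) 0 ≤ z := max_le (by linarith) hz0.le
  have h2 : max (z - lam) 0 ^ s ≤ z ^ s :=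
    Real.rpow_le_rpow (le_max_right _ _) h1 hs.le
  have he : Real.exp (-z * t) = Real.exp (-t * z) := by ring_nf
  rw [he]
  exact mul_le_mul_of_nonneg_right h2 (Real.exp_nonneg _)

lemma aux_integral {s lam t : ℝ} (hs : 0 < s) (hlam : 0 ≤ lam) (ht : 0 < t) :
    ∫ z in Ioi (0:ℝ), max (z - lam) 0 ^ s * Real.exp (-z * t)
      = Real.Gamma (s + 1) * Real.exp (-lam * t) / t ^ (s + 1) := by
  have hInt := aux_integrable hs hlam ht
  have hsplit : Ioc (0:ℝ) lam ∪ Ioi lam = Ioi 0 := Ioc_union_Ioi_eq_Ioi hlam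
  have h0 : ∫ z in Ioc (0:ℝ) lam, max (z - lam) 0 ^ s * Real.exp (-z * t) = 0 := by
    rw [setIntegral_congr_fun measurableSet_Ioc (g := fun _ => (0:ℝ))
      (fun z hz => by
        have hzl : z - lam ≤ 0 := by linarith [hz.2]
        simp [max_eq_right hzl, Real.zero_rpow hs.ne'])]
    simp
  have hU : ∫ z in Ioi (0:ℝ), max (z - lam) 0 ^ s * Real.exp (-z * t)
      = (∫ z in Ioc (0:ℝ) lam, max (z - lam) 0 ^ s * Real.exp (-z * t))
        + ∫ z in Ioi lam, max (z - lam) 0 ^ s * Real.exp (-z * t) := by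
    rw [← hsplit, setIntegral_union (Ioc_disjoint_Ioi le_rfl) measurableSet_Ioi
      (hInt.mono_set (by rw [← hsplit]; exact subset_union_left))
      (hInt.mono_set (by rw [← hsplit]; exact subset_union_right))]
  have hshift : ∫ z in Ioi lam, max (z - lam) 0 ^ s * Real.exp (-z * t)
      = ∫ x in Ioi (0:ℝ), max (x + lam - lam) 0 ^ s * Real.exp (-(x + lam) * t) := by
    rw [← (measurePreserving_add_right volume lam).setIntegral_preimage_emb
      (measurableEmbedding_addRight lam)
      (fun z => max (z - lam) 0 ^ s * Real.exp (-z * t)) (Ioi lam)]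
    congr 1
    ext x
    simp [lt_add_iff_pos_left]
  have hval : ∫ x in Ioi (0:ℝ), max (x + lam - lam) 0 ^ s * Real.exp (-(x + lam) * t)
      = Real.Gamma (s + 1) * Real.exp (-lam * t) / t ^ (s + 1) := by
    have hcong : ∫ x in Ioi (0:ℝ), max (x + lam - lam) 0 ^ s * Real.exp (-(x + lam) * t)
        = ∫ x in Ioi (0:ℝ), (x ^ (s + 1 - 1) * Real.exp (-(t * x))) * Real.exp (-lam * t) := by
      refine setIntegral_congr_fun measurableSet_Ioi (fun x hx => ?_)
      have hx0 : (0:ℝ) < x := hx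
      rw [add_sub_cancel_right, add_sub_cancel_right, max_eq_left hx0.le,
        show -(x+lam)*t = -(t*x) + -lam*t by ring, Real.exp_add]
      ring
    rw [hcong, integral_mul_const,
      integral_rpow_mul_exp_neg_mul_Ioi (a := s + 1) (by linarith) ht,
      one_div, Real.inv_rpow ht.le]
    ring
  rw [hU, h0, zero_add, hshift, hval]

/-- Lower bound for the partition function from a Riesz-mean lower bound: if for some
`ρ ≥ 1` and `A > 0` one has `Σ_k (z-λ_k)_+^ρ ≥ A (z-λ₁)_+^{ρ+d/2}` for all `z ≥ 0`,
then for every `t > 0`,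
`Z(t) = Σ_k e^{-λ_k t} ≥ A [Γ(ρ+1+d/2)/Γ(ρ+1)] e^{-λ₁ t} t^{-d/2}`.
Here `λ₁ = lam 0` is the first element of the sequence. -/
theorem partition_lower_bound (d : ℕ) (hd : 0 < d)
    (lam : ℕ → ℝ) (hmono : Monotone lam) (hpos : ∀ k, 0 < lam k)
    (htend : Tendsto lam atTop atTop)
    (hZ : ∀ t > (0 : ℝ), Summable fun k => Real.exp (-lam k * t))
    (ρ A : ℝ) (hρ : 1 ≤ ρ) (hA : 0 < A)
    (h : ∀ z ≥ (0 : ℝ),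
      A * (max (z - lam 0) 0) ^ (ρ + (d : ℝ) / 2) ≤ ∑' k, (max (z - lam k) 0) ^ ρ)
    (t : ℝ) (ht : 0 < t) :
    A * (Gamma (ρ + 1 + (d : ℝ) / 2) / Gamma (ρ + 1)) *
        Real.exp (-lam 0 * t) * t ^ (-(d : ℝ) / 2) ≤
      ∑' k, Real.exp (-lam k * t) := by
  have hd1 : (1:ℝ) ≤ (d:ℝ) := by exact_mod_cast hd
  have hd2 : (0:ℝ) < (d:ℝ)/2 := by linarith
  have hσ : 0 < ρ + (d:ℝ)/2 := by linarith
  have hρ0 : (0:ℝ) < ρ := by linarith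
  set Z := ∑' k, Real.exp (-lam k * t) with hZdef
  have hZt := hZ t ht
  have hIg := aux_integral (s := ρ + (d:ℝ)/2) (lam := lam 0) hσ (hpos 0).le ht
  have hIf : ∀ k, ∫ z in Ioi (0:ℝ), max (z - lam k) 0 ^ ρ * Real.exp (-z * t)
      = Real.Gamma (ρ+1) * Real.exp (-lam k * t) / t ^ (ρ+1) :=
    fun k => aux_integral hρ0 (hpos k).le ht
  have hfi : ∀ k, IntegrableOn (fun z => max (z - lam k) 0 ^ ρ * Real.exp (-z * t)) (Ioi 0) :=
    fun k => aux_integrable hρ0 (hpos k).le ht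
  have hS : Summable fun k => Real.Gamma (ρ+1) * Real.exp (-lam k * t) / t ^ (ρ+1) := by
    refine (hZt.mul_left (Real.Gamma (ρ+1) / t ^ (ρ+1))).congr fun k => ?_
    rw [div_mul_eq_mul_div]
  have hSint : Summable fun k => ∫ z in Ioi (0:ℝ), max (z - lam k) 0 ^ ρ * Real.exp (-z * t) :=
    hS.congr fun k => (hIf k).symm
  have hsum : ∀ z : ℝ, Summable fun k => max (z - lam k) 0 ^ ρ * Real.exp (-z * t) := by
    intro z
    obtain ⟨N, hN⟩ := Filter.eventually_atTop.mp (htend.eventually_ge_atTop (z + 1))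
    refine summable_of_ne_finset_zero (s := Finset.range N) fun k hk => ?_
    have hkN : N ≤ k := le_of_not_gt fun hc => hk (Finset.mem_range.mpr hc)
    have hzl : z - lam k ≤ 0 := by linarith [hN k hkN]
    rw [max_eq_right hzl, Real.zero_rpow hρ0.ne', zero_mul]
  -- the key Laplace-transform inequality
  have key : A * (Real.Gamma (ρ + (d:ℝ)/2 + 1) * Real.exp (-lam 0 * t) / t ^ (ρ + (d:ℝ)/2 + 1))
      ≤ ∑' k, Real.Gamma (ρ+1) * Real.exp (-lam k * t) / t ^ (ρ+1) := by
    rw [← hIg]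
    have hRHSnn : 0 ≤ ∑' k, Real.Gamma (ρ+1) * Real.exp (-lam k * t) / t ^ (ρ+1) :=
      tsum_nonneg fun k => by positivity
    rw [← ENNReal.ofReal_le_ofReal_iff hRHSnn]
    have hgint : Integrable
        (fun z => A * (max (z - lam 0) 0 ^ (ρ + (d:ℝ)/2) * Real.exp (-z * t)))
        (volume.restrict (Ioi 0)) := (aux_integrable hσ (hpos 0).le ht).const_mul A
    calc ENNReal.ofReal (A * ∫ z in Ioi (0:ℝ),
            max (z - lam 0) 0 ^ (ρ + (d:ℝ)/2) * Real.exp (-z * t))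
        = ENNReal.ofReal (∫ z in Ioi (0:ℝ),
            A * (max (z - lam 0) 0 ^ (ρ + (d:ℝ)/2) * Real.exp (-z * t))) := by
          rw [integral_const_mul]
      _ = ∫⁻ z in Ioi (0:ℝ), ENNReal.ofReal
            (A * (max (z - lam 0) 0 ^ (ρ + (d:ℝ)/2) * Real.exp (-z * t))) :=
          ofReal_integral_eq_lintegral_ofReal hgint
            (Filter.Eventually.of_forall fun z => by positivity)
      _ ≤ ∫⁻ z in Ioi (0:ℝ), ∑' k,
            ENNReal.ofReal (max (z - lam k) 0 ^ ρ * Real.exp (-z * t)) := by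
          refine lintegral_mono_ae ?_
          filter_upwards [ae_restrict_mem measurableSet_Ioi] with z hz
          have hz0 : (0:ℝ) < z := hz
          rw [← ENNReal.ofReal_tsum_of_nonneg (fun k => by positivity) (hsum z)]
          apply ENNReal.ofReal_le_ofReal
          calc A * (max (z - lam 0) 0 ^ (ρ + (d:ℝ)/2) * Real.exp (-z * t))
              = (A * max (z - lam 0) 0 ^ (ρ + (d:ℝ)/2)) * Real.exp (-z * t) := by ring
            _ ≤ (∑' k, max (z - lam k) 0 ^ ρ) * Real.exp (-z * t) :=
                mul_le_mul_of_nonneg_right (h z hz0.le) (Real.exp_nonneg _)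
            _ = ∑' k, max (z - lam k) 0 ^ ρ * Real.exp (-z * t) := tsum_mul_right.symm
      _ = ∑' k, ∫⁻ z in Ioi (0:ℝ),
            ENNReal.ofReal (max (z - lam k) 0 ^ ρ * Real.exp (-z * t)) :=
          lintegral_tsum fun k => ((aux_meas (lam k) t hρ0.le).ennreal_ofReal).aemeasurable
      _ = ∑' k, ENNReal.ofReal
            (∫ z in Ioi (0:ℝ), max (z - lam k) 0 ^ ρ * Real.exp (-z * t)) :=
          tsum_congr fun k => (ofReal_integral_eq_lintegral_ofReal (hfi k)
            (Filter.Eventually.of_forall fun z => by positivity)).symm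
      _ = ENNReal.ofReal (∑' k,
            ∫ z in Ioi (0:ℝ), max (z - lam k) 0 ^ ρ * Real.exp (-z * t)) :=
          (ENNReal.ofReal_tsum_of_nonneg
            (fun k => setIntegral_nonneg measurableSet_Ioi fun z _ => by positivity) hSint).symm
      _ = ENNReal.ofReal (∑' k, Real.Gamma (ρ+1) * Real.exp (-lam k * t) / t ^ (ρ+1)) := by
          rw [tsum_congr hIf]
  have hRHS : (∑' k, Real.Gamma (ρ+1) * Real.exp (-lam k * t) / t ^ (ρ+1))
      = (Real.Gamma (ρ+1) / t ^ (ρ+1)) * Z := by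
    rw [← tsum_mul_left]
    exact tsum_congr fun k => by rw [div_mul_eq_mul_div]
  rw [hRHS] at key
  have hΓρ : 0 < Real.Gamma (ρ+1) := Real.Gamma_pos_of_pos (by linarith)
  have ht1 : 0 < t ^ (ρ+1) := Real.rpow_pos_of_pos ht _
  have ht2 : 0 < t ^ ((d:ℝ)/2) := Real.rpow_pos_of_pos ht _
  have hE : 0 < Real.exp (-lam 0 * t) := Real.exp_pos _
  have hZnn : 0 ≤ Z := tsum_nonneg fun k => (Real.exp_pos _).le
  have hexp : t ^ (ρ + (d:ℝ)/2 + 1) = t ^ (ρ+1) * t ^ ((d:ℝ)/2) := by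
    rw [← Real.rpow_add ht]; ring_nf
  have hg1 : Real.Gamma (ρ + 1 + (d:ℝ)/2) = Real.Gamma (ρ + (d:ℝ)/2 + 1) := by ring_nf
  have hneg : t ^ (-(d:ℝ)/2) = (t ^ ((d:ℝ)/2))⁻¹ := by
    rw [neg_div, Real.rpow_neg ht.le]
  rw [hexp] at key
  have key5 : A * Real.Gamma (ρ + (d:ℝ)/2 + 1) * Real.exp (-lam 0 * t)
      ≤ Real.Gamma (ρ+1) * Z * t ^ ((d:ℝ)/2) := by
    have h1 : A * (Real.Gamma (ρ + (d:ℝ)/2 + 1) * Real.exp (-lam 0 * t)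
          / (t ^ (ρ+1) * t ^ ((d:ℝ)/2)))
        = (A * Real.Gamma (ρ + (d:ℝ)/2 + 1) * Real.exp (-lam 0 * t))
          / (t ^ (ρ+1) * t ^ ((d:ℝ)/2)) := by ring
    rw [h1, div_le_iff₀ (mul_pos ht1 ht2)] at key
    calc A * Real.Gamma (ρ + (d:ℝ)/2 + 1) * Real.exp (-lam 0 * t)
        ≤ Real.Gamma (ρ+1) / t ^ (ρ+1) * Z * (t ^ (ρ+1) * t ^ ((d:ℝ)/2)) := key
      _ = Real.Gamma (ρ+1) * Z * t ^ ((d:ℝ)/2) := by field_simp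
  rw [hg1, hneg]
  have hgoal : A * (Real.Gamma (ρ + (d:ℝ)/2 + 1) / Real.Gamma (ρ+1))
        * Real.exp (-lam 0 * t) * (t ^ ((d:ℝ)/2))⁻¹
      = (A * Real.Gamma (ρ + (d:ℝ)/2 + 1) * Real.exp (-lam 0 * t))
        / (Real.Gamma (ρ+1) * t ^ ((d:ℝ)/2)) := by
    field_simp
  rw [hgoal, div_le_iff₀ (mul_pos hΓρ ht2)]
  calc A * Real.Gamma (ρ + (d:ℝ)/2 + 1) * Real.exp (-lam 0 * t)
      ≤ Real.Gamma (ρ+1) * Z * t ^ ((d:ℝ)/2) := key5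
    _ = Z * (Real.Gamma (ρ+1) * t ^ ((d:ℝ)/2)) := by ring
end

section
/- Let d be a positive integer and (λ_k)_{k≥1} a nondecreasing sequence of positive real numbers with λ_k → ∞ such that Z(t) = Σ_k e^{−λ_k t} < ∞ for every t > 0. Suppose there is a constant B > 0 such that Z(t) ≥ B·e^{−λ_1 t}·t^{−d/2} for all t > 0. Then for every real ρ > d/2 the spectral zeta function satisfies Σ_k λ_k^{−ρ} ≥ B · [Γ(ρ−d/2)/Γ(ρ)] · λ_1^{d/2−ρ}. -/
open MeasureTheory Real Filter Set

lemma gamma_lintegral {a r : ℝ} (ha : 0 < a) (hr : 0 < r) :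
    ∫⁻ t in Ioi (0:ℝ), ENNReal.ofReal (t ^ (a - 1) * Real.exp (-(r * t))) =
      ENNReal.ofReal ((1 / r) ^ a * Gamma a) := by
  rw [← integral_rpow_mul_exp_neg_mul_Ioi ha hr]
  rw [← ofReal_integral_eq_lintegral_ofReal]
  · have : IntegrableOn (fun t : ℝ => t ^ (a - 1) * Real.exp (-(r * t))) (Ioi 0) := by
      have := integrableOn_rpow_mul_exp_neg_mul_rpow (p := 1) (s := a - 1) (b := r)
        (by linarith) zero_lt_one hr
      simpa [Real.rpow_one] using this
    exact this
  · filter_upwards [self_mem_ae_restrict measurableSet_Ioi] with t ht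
    exact mul_nonneg (Real.rpow_nonneg (le_of_lt ht) _) (Real.exp_pos _).le


/-- Lower bound for the spectral zeta function from a partition-function lower bound:
if `Z(t) = Σ_k e^{-λ_k t} ≥ B e^{-λ₁ t} t^{-d/2}` for all `t > 0`, then for every
`ρ > d/2`, `ζ_spec(ρ) = Σ_k λ_k^{-ρ} ≥ B [Γ(ρ-d/2)/Γ(ρ)] λ₁^{d/2-ρ}`.
The spectral zeta value is taken in `[0,∞]`; `λ₁ = lam 0`. -/
theorem zeta_lower_bound (d : ℕ) (hd : 0 < d)
    (lam : ℕ → ℝ) (hmono : Monotone lam) (hpos : ∀ k, 0 < lam k)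
    (htend : Tendsto lam atTop atTop)
    (hZ : ∀ t > (0 : ℝ), Summable fun k => Real.exp (-lam k * t))
    (B : ℝ) (hB : 0 < B)
    (h : ∀ t > (0 : ℝ),
      B * Real.exp (-lam 0 * t) * t ^ (-(d : ℝ) / 2) ≤ ∑' k, Real.exp (-lam k * t))
    (ρ : ℝ) (hρ : (d : ℝ) / 2 < ρ) :
    ENNReal.ofReal (B * (Gamma (ρ - (d : ℝ) / 2) / Gamma ρ) * lam 0 ^ ((d : ℝ) / 2 - ρ)) ≤
      ∑' k, ENNReal.ofReal (lam k ^ (-ρ)) := by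
  have hd2 : (0:ℝ) < (d : ℝ) / 2 := by positivity
  have hρ0 : (0:ℝ) < ρ := lt_trans hd2 hρ
  have hΓρ : 0 < Gamma ρ := Gamma_pos_of_pos hρ0
  have hs : (0:ℝ) < ρ - (d : ℝ) / 2 := by linarith
  have hΓs : 0 < Gamma (ρ - (d : ℝ) / 2) := Gamma_pos_of_pos hs
  have hpow : ∀ k : ℕ, ∀ c : ℝ, (1 / lam k) ^ c = lam k ^ (-c) := fun k c => by
    rw [one_div, ← Real.rpow_neg_one (lam k), ← Real.rpow_mul (hpos k).le, neg_one_mul]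
  -- reduce to multiplied-by-Γ(ρ) version
  rw [← ENNReal.mul_le_mul_iff_left (c := ENNReal.ofReal (Gamma ρ))
      (by simpa using hΓρ) ENNReal.ofReal_ne_top]
  have hL : ENNReal.ofReal (B * (Gamma (ρ - (d : ℝ) / 2) / Gamma ρ) * lam 0 ^ ((d : ℝ) / 2 - ρ)) *
      ENNReal.ofReal (Gamma ρ)
      = ENNReal.ofReal (B * ((1 / lam 0) ^ (ρ - (d:ℝ)/2) * Gamma (ρ - (d : ℝ) / 2))) := by
    rw [← ENNReal.ofReal_mul
      (mul_nonneg (mul_nonneg hB.le (div_nonneg hΓs.le hΓρ.le)) (Real.rpow_nonneg (hpos 0).le _))]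
    congr 1
    rw [hpow 0, show -(ρ - (d:ℝ)/2) = (d:ℝ)/2 - ρ by ring]
    field_simp
  rw [hL]
  -- RHS: pull Γ(ρ) into the sum
  have hR : (∑' k, ENNReal.ofReal (lam k ^ (-ρ))) * ENNReal.ofReal (Gamma ρ)
      = ∑' k, ∫⁻ t in Ioi (0:ℝ), ENNReal.ofReal (t ^ (ρ - 1) * Real.exp (-(lam k * t))) := by
    rw [← ENNReal.tsum_mul_right]
    congr 1; funext k
    rw [gamma_lintegral hρ0 (hpos k), hpow k ρ,
      ← ENNReal.ofReal_mul (Real.rpow_nonneg (hpos k).le _)]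
  rw [hR]
  -- Tonelli
  have hmeasR : ∀ k : ℕ, Measurable
      (fun t : ℝ => ENNReal.ofReal (t ^ (ρ - 1) * Real.exp (-(lam k * t)))) := by
    intro k
    apply Measurable.ennreal_ofReal
    fun_prop
  rw [← MeasureTheory.lintegral_tsum (fun k => (hmeasR k).aemeasurable)]
  -- pointwise lower bound of the integrand
  have hpt : ∀ t ∈ Ioi (0:ℝ),
      ENNReal.ofReal (B * (t ^ ((ρ - (d:ℝ)/2) - 1) * Real.exp (-(lam 0 * t)))) ≤
        ∑' k, ENNReal.ofReal (t ^ (ρ - 1) * Real.exp (-(lam k * t))) := by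
    intro t ht
    have ht0 : (0:ℝ) < t := ht
    have hsum : Summable fun k => Real.exp (-lam k * t) := hZ t ht0
    have hsum2 : Summable fun k => t ^ (ρ - 1) * Real.exp (-lam k * t) := hsum.mul_left _
    have e1 : ∀ k : ℕ, t ^ (ρ - 1) * Real.exp (-(lam k * t))
        = t ^ (ρ - 1) * Real.exp (-lam k * t) := fun k => by rw [neg_mul]
    have key : (∑' k, ENNReal.ofReal (t ^ (ρ - 1) * Real.exp (-(lam k * t))))
        = ENNReal.ofReal (t ^ (ρ - 1) * ∑' k, Real.exp (-lam k * t)) := by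
      simp_rw [e1]
      rw [← ENNReal.ofReal_tsum_of_nonneg
        (fun k => mul_nonneg (Real.rpow_nonneg ht0.le _) (Real.exp_pos _).le) hsum2,
        tsum_mul_left]
    rw [key]
    apply ENNReal.ofReal_le_ofReal
    calc B * (t ^ ((ρ - (d:ℝ)/2) - 1) * Real.exp (-(lam 0 * t)))
        = t ^ (ρ - 1) * (B * Real.exp (-lam 0 * t) * t ^ (-(d:ℝ)/2)) := by
          rw [show ρ - (d:ℝ)/2 - 1 = (ρ - 1) + (-(d:ℝ)/2) by ring, Real.rpow_add ht0,
            neg_mul]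
          ring
      _ ≤ t ^ (ρ - 1) * ∑' k, Real.exp (-lam k * t) :=
          mul_le_mul_of_nonneg_left (h t ht0) (Real.rpow_nonneg ht0.le _)
  calc ENNReal.ofReal (B * ((1 / lam 0) ^ (ρ - (d:ℝ)/2) * Gamma (ρ - (d : ℝ) / 2)))
      = ENNReal.ofReal B * ∫⁻ t in Ioi (0:ℝ),
          ENNReal.ofReal (t ^ ((ρ - (d:ℝ)/2) - 1) * Real.exp (-(lam 0 * t))) := by
        rw [gamma_lintegral hs (hpos 0), ← ENNReal.ofReal_mul hB.le]
    _ = ∫⁻ t in Ioi (0:ℝ),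
          ENNReal.ofReal (B * (t ^ ((ρ - (d:ℝ)/2) - 1) * Real.exp (-(lam 0 * t)))) := by
        rw [← lintegral_const_mul' _ _ ENNReal.ofReal_ne_top]
        congr 1; funext t; rw [← ENNReal.ofReal_mul hB.le]
    _ ≤ _ := setLIntegral_mono_ae
          (Measurable.ennreal_tsum fun k => hmeasR k).aemeasurable
          (Filter.Eventually.of_forall hpt)
end

section
/- Let d be a positive integer and (λ_k)_{k≥1} a nondecreasing sequence of positive real numbers. Suppose there are constants a > 0 and b ≥ 0 such that Σ_{i=1}^k λ_i ≥ a·k^{1+2/d} + b·k for every k ≥ 1. Then for every z ∈ ℝ: Σ_k (z−λ_k)_+ ≤ (2/(d+2)) · (d/((d+2)a))^{d/2} · (z−b)_+^{1+d/2}. -/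
open MeasureTheory Real Filter Set

/-- Key pointwise Legendre/Young inequality: for `t ≥ 0`,
`t w - a t^{1+2/d} ≤ [2/(d+2)] [d/((d+2)a)]^{d/2} (w)_+^{1+d/2}`. -/
lemma melas_young_key (d : ℕ) (hd : 0 < d) (a : ℝ) (ha : 0 < a)
    (w t : ℝ) (ht : 0 ≤ t) :
    t * w - a * t ^ (1 + 2 / (d : ℝ)) ≤
      2 / ((d : ℝ) + 2) * ((d : ℝ) / (((d : ℝ) + 2) * a)) ^ ((d : ℝ) / 2) *
        (max w 0) ^ (1 + (d : ℝ) / 2) := by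
  have hD : (0 : ℝ) < d := by exact_mod_cast hd
  set D : ℝ := (d : ℝ) with hDdef
  set p : ℝ := 1 + 2 / D with hp
  set q : ℝ := 1 + D / 2 with hq
  have hp1 : 1 < p := by
    have : 0 < 2 / D := by positivity
    simp [hp]; linarith
  have hp0 : 0 < p := by linarith
  have hq0 : 0 < q := by
    have : 0 < D / 2 := by positivity
    simp [hq]; linarith
  have hD2 : (0 : ℝ) < D + 2 := by linarith
  have hpq : p.HolderConjugate q := by
    rw [Real.holderConjugate_iff]
    constructor
    · exact hp1
    · rw [hp, hq]
      field_simp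
      ring
  have hRHSnn : 0 ≤ 2 / (D + 2) * (D / ((D + 2) * a)) ^ (D / 2) *
      (max w 0) ^ (1 + D / 2) := by positivity
  rcases le_or_gt w 0 with hw | hw
  · have h1 : t * w ≤ 0 := mul_nonpos_of_nonneg_of_nonpos ht hw
    have h2 : 0 ≤ a * t ^ (1 + 2 / D) := by positivity
    calc t * w - a * t ^ (1 + 2 / D) ≤ 0 := by linarith
    _ ≤ _ := hRHSnn
  · have hmax : max w 0 = w := max_eq_left hw.le
    -- Young's inequality with x = α t, y = w / α where α = (a p)^(1/p)
    set α : ℝ := (a * p) ^ (1 / p) with hα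
    have hap : 0 < a * p := mul_pos ha hp0
    have hα0 : 0 < α := Real.rpow_pos_of_pos hap _
    have hyoung := Real.young_inequality_of_nonneg
      (mul_nonneg hα0.le ht) (div_nonneg hw.le hα0.le) hpq
    have hxy : α * t * (w / α) = t * w := by
      field_simp
    have hαp : α ^ p = a * p := by
      rw [hα, ← Real.rpow_mul hap.le, one_div, inv_mul_cancel₀ hp0.ne', Real.rpow_one]
    have hxp : (α * t) ^ p = a * p * t ^ p := by
      rw [Real.mul_rpow hα0.le ht, hαp]
    have hqp : q / p = D / 2 := by
      rw [hp, hq]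
      field_simp
      ring
    have hαq : α ^ q = (a * p) ^ (D / 2) := by
      rw [hα, ← Real.rpow_mul hap.le, one_div, inv_mul_eq_div, hqp]
    have hyq : (w / α) ^ q = w ^ q / (a * p) ^ (D / 2) := by
      rw [Real.div_rpow hw.le hα0.le, hαq]
    rw [hxy, hxp, hyq] at hyoung
    have hstep : t * w - a * t ^ p ≤ w ^ q / (a * p) ^ (D / 2) / q := by
      have : a * p * t ^ p / p = a * t ^ p := by
        field_simp
      linarith [hyoung, this ▸ hyoung]
    -- now identify the RHS
    have hid : w ^ q / (a * p) ^ (D / 2) / q =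
        2 / (D + 2) * (D / ((D + 2) * a)) ^ (D / 2) * (max w 0) ^ (1 + D / 2) := by
      rw [hmax, ← hq]
      have hpval : p = (D + 2) / D := by
        rw [hp]; field_simp
      have hqval : q = (D + 2) / 2 := by
        rw [hq]; ring
      have h1 : D / ((D + 2) * a) = (a * p)⁻¹ := by
        rw [hpval, mul_div_assoc', inv_div]
        ring
      have h2 : (2 : ℝ) / (D + 2) = 1 / q := by
        rw [hqval, one_div_div]
      rw [h1, h2, Real.inv_rpow hap.le]
      rw [div_div, one_div, div_eq_mul_inv, mul_inv]
      ring
    rw [← hid]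
    exact hstep

/-- Legendre transform of a Melas-type bound: if
`Σ_{i=1}^k λ_i ≥ a k^{1+2/d} + b k` for all `k ≥ 1`, then for every `z`,
`Σ_k (z-λ_k)_+ ≤ [2/(d+2)] [d/((d+2)a)]^{d/2} (z-b)_+^{1+d/2}`. -/
theorem melas_legendre_transform (d : ℕ) (hd : 0 < d)
    (lam : ℕ → ℝ) (hmono : Monotone lam) (hpos : ∀ k, 0 < lam k)
    (a b : ℝ) (ha : 0 < a) (hb : 0 ≤ b)
    (h : ∀ k : ℕ, 1 ≤ k →
      a * (k : ℝ) ^ (1 + 2 / (d : ℝ)) + b * k ≤ ∑ i ∈ Finset.range k, lam i)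
    (z : ℝ) :
    ∑' k, max (z - lam k) 0 ≤
      2 / ((d : ℝ) + 2) * ((d : ℝ) / (((d : ℝ) + 2) * a)) ^ ((d : ℝ) / 2) *
        (max (z - b) 0) ^ (1 + (d : ℝ) / 2) := by
  have hD : (0 : ℝ) < d := by exact_mod_cast hd
  set C : ℝ := 2 / ((d : ℝ) + 2) * ((d : ℝ) / (((d : ℝ) + 2) * a)) ^ ((d : ℝ) / 2) *
      (max (z - b) 0) ^ (1 + (d : ℝ) / 2) with hC
  have hCnn : 0 ≤ C := by positivity
  -- reduce to partial sums over `range N`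
  have key : ∀ N : ℕ, ∑ k ∈ Finset.range N, max (z - lam k) 0 ≤ C := by
    intro N
    have hex : ∃ k, z ≤ lam k ∨ k = N := ⟨N, Or.inr rfl⟩
    set n : ℕ := Nat.find hex with hn
    have hnN : n ≤ N := Nat.find_le (Or.inr rfl)
    have hlt : ∀ k, k < n → lam k < z := by
      intro k hk
      have := Nat.find_min hex hk
      push_neg at this
      exact this.1
    have hsum_split : ∑ k ∈ Finset.range N, max (z - lam k) 0 =
        ∑ k ∈ Finset.range n, max (z - lam k) 0 := by
      rw [Finset.range_eq_Ico, ← Finset.sum_Ico_consecutive _ (Nat.zero_le n) hnN,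
        ← Finset.range_eq_Ico]
      have : ∑ k ∈ Finset.Ico n N, max (z - lam k) 0 = 0 := by
        apply Finset.sum_eq_zero
        intro k hk
        rw [Finset.mem_Ico] at hk
        have hnltN : n < N := lt_of_le_of_lt hk.1 hk.2
        have hspec := Nat.find_spec hex
        rw [← hn] at hspec
        have hzn : z ≤ lam n := by
          rcases hspec with h' | h'
          · exact h'
          · exact absurd h' hnltN.ne
        have : z ≤ lam k := le_trans hzn (hmono hk.1)
        simp [max_eq_right, sub_nonpos.mpr this]
      rw [this, add_zero]
    rw [hsum_split]
    rcases Nat.eq_zero_or_pos n with hn0 | hn0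
    · rw [hn0]
      simpa using hCnn
    · have heq : ∑ k ∈ Finset.range n, max (z - lam k) 0 =
          (n : ℝ) * z - ∑ k ∈ Finset.range n, lam k := by
        have : ∀ k ∈ Finset.range n, max (z - lam k) 0 = z - lam k := by
          intro k hk
          rw [Finset.mem_range] at hk
          exact max_eq_left (by linarith [hlt k hk])
        rw [Finset.sum_congr rfl this, Finset.sum_sub_distrib, Finset.sum_const,
          Finset.card_range, nsmul_eq_mul]
      rw [heq]
      have hlam := h n hn0
      have hkey := melas_young_key d hd a ha (z - b) (n : ℝ) (Nat.cast_nonneg n)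
      calc (n : ℝ) * z - ∑ k ∈ Finset.range n, lam k
          ≤ (n : ℝ) * z - (a * (n : ℝ) ^ (1 + 2 / (d : ℝ)) + b * n) := by linarith
        _ = (n : ℝ) * (z - b) - a * (n : ℝ) ^ (1 + 2 / (d : ℝ)) := by ring
        _ ≤ C := hkey
  have hsummable_or : ∑' k, max (z - lam k) 0 ≤ C := by
    apply tsum_le_of_sum_le' hCnn
    intro u
    obtain ⟨N, hN⟩ := u.exists_nat_subset_range
    calc ∑ k ∈ u, max (z - lam k) 0
        ≤ ∑ k ∈ Finset.range N, max (z - lam k) 0 :=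
          Finset.sum_le_sum_of_subset_of_nonneg hN (fun i _ _ => le_max_right _ _)
      _ ≤ C := key N
  exact hsummable_or
end
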